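/- Let 0 < R ≤ 1/6, let N ≥ 1 be a natural number, and 0 ≤ i ≤ N-1, and let γ ∈ (0,1]. Then ln^γ( ln^{1/2}( 1/(2(1 - i/(3N))R) ) ) ≤ ln^γ( ln^{1/2}(1/(2R)) ) + (i/N)^{γ/2}, provided ln(1/(2R)) ≥ 1. -/

import Mathlib

/-!
Put `a = 1/(2R)` and `x = i/(3N) ≤ 1/3`, so that the shrunken radius gives `a/(1-x)`.
Since `-log(1-x) ≤ 2x`, the inner logarithm grows by at most `2x`; as it is at least `1`,
the next logarithm also grows by at most `2x`, and the square root halves this to `x`.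
Subadditivity of `t ↦ t^γ` then splits off `x^γ ≤ (3x)^{γ/2} = (i/N)^{γ/2}`.
-/

open Real

namespace Real

lemma neg_log_one_sub_le_two_mul {x : ℝ} (hx0 : 0 ≤ x) (hx : x ≤ 1 / 2) :
    -log (1 - x) ≤ 2 * x := by
  have hpos : 0 < 1 - x := by linarith
  have hlog := one_sub_inv_le_log_of_pos hpos
  have hinv : (1 - x)⁻¹ - 1 ≤ 2 * x := by
    rw [inv_eq_one_div, div_sub_one hpos.ne', div_le_iff₀ hpos]
    nlinarith
  linarith

lemma log_add_le_log_add {L t : ℝ} (hL : 1 ≤ L) (ht : 0 ≤ t) :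
    log (L + t) ≤ log L + t := by
  have hL0 : 0 < L := by linarith
  have hsplit : log (L + t) = log L + log (1 + t / L) := by
    rw [← log_mul hL0.ne' (by positivity), mul_add, mul_div_cancel₀ _ hL0.ne', mul_one]
  have hratio : t / L ≤ t := div_le_self ht hL
  have hlog := log_le_sub_one_of_pos (show 0 < 1 + t / L by positivity)
  linarith

lemma one_le_log_div_one_sub {a x : ℝ} (ha : 1 ≤ log a) (hx0 : 0 ≤ x) (hx : x < 1) :
    1 ≤ log (a / (1 - x)) := by
  have ha0 : a ≠ 0 := by rintro rfl; norm_num at ha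
  rw [log_div ha0 (by linarith)]
  linarith [log_nonpos (by linarith : 0 ≤ 1 - x) (by linarith)]

lemma log_sqrt_log_div_one_sub_le {a x : ℝ} (ha : 1 ≤ log a) (hx0 : 0 ≤ x) (hx : x ≤ 1 / 2) :
    log √(log (a / (1 - x))) ≤ log √(log a) + x := by
  have ha0 : a ≠ 0 := by rintro rfl; norm_num at ha
  have hgrow : log (a / (1 - x)) ≤ log a + 2 * x := by
    rw [log_div ha0 (by linarith)]
    linarith [neg_log_one_sub_le_two_mul hx0 hx]
  have hlow := one_le_log_div_one_sub ha hx0 (by linarith)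
  have hloglog : log (log (a / (1 - x))) ≤ log (log a) + 2 * x :=
    calc log (log (a / (1 - x))) ≤ log (log a + 2 * x) := log_le_log (by linarith) hgrow
      _ ≤ log (log a) + 2 * x := log_add_le_log_add ha (by linarith)
  rw [log_sqrt (by linarith), log_sqrt (by linarith)]
  linarith

lemma rpow_le_rpow_half_of_sq_le {x y γ : ℝ} (hx : 0 ≤ x) (hxy : x ^ 2 ≤ y) (hγ : 0 ≤ γ) :
    x ^ γ ≤ y ^ (γ / 2) := by
  calc x ^ γ = (x ^ 2) ^ (γ / 2) := by
        rw [← rpow_natCast, ← rpow_mul hx]; ring_nf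
    _ ≤ y ^ (γ / 2) := rpow_le_rpow (by positivity) hxy (by linarith)

end Real

theorem iterated_log_shift_bound_general (R : ℝ)
    (N : ℕ) (i : ℕ) (hi : i ≤ N - 1)
    (γ : ℝ) (hγ0 : 0 < γ) (hγ1 : γ ≤ 1)
    (hlog : 1 ≤ Real.log (1 / (2 * R))) :
    (Real.log (Real.sqrt (Real.log (1 / (2 * (1 - (i : ℝ) / (3 * (N : ℝ))) * R))))) ^ γ
      ≤ (Real.log (Real.sqrt (Real.log (1 / (2 * R))))) ^ γ + ((i : ℝ) / (N : ℝ)) ^ (γ / 2) := by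
  have hradius : 1 / (2 * (1 - (i : ℝ) / (3 * N)) * R) = 1 / (2 * R) / (1 - i / (3 * N)) := by
    rw [div_div, mul_right_comm]
  have hiN : (i : ℝ) / N ≤ 1 := div_le_one_of_le₀ (by exact_mod_cast hi.trans (N.sub_le 1))
    (by positivity)
  rw [hradius]
  set x : ℝ := (i : ℝ) / (3 * N) with hx
  set a : ℝ := 1 / (2 * R)
  have hx3 : (i : ℝ) / N = 3 * x := by rw [hx]; ring
  rw [hx3] at hiN ⊢
  have hx0 : 0 ≤ x := by positivity
  have hfa : 0 ≤ log √(log a) := log_nonneg (one_le_sqrt.mpr hlog)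
  have hfax : 0 ≤ log √(log (a / (1 - x))) :=
    log_nonneg (one_le_sqrt.mpr (one_le_log_div_one_sub hlog hx0 (by linarith)))
  calc log √(log (a / (1 - x))) ^ γ ≤ (log √(log a) + x) ^ γ :=
        rpow_le_rpow hfax (log_sqrt_log_div_one_sub_le hlog hx0 (by linarith)) hγ0.le
    _ ≤ log √(log a) ^ γ + x ^ γ := rpow_add_le_add_rpow hfa hx0 hγ0.le hγ1
    _ ≤ log √(log a) ^ γ + (3 * x) ^ (γ / 2) := by
        gcongr
        exact rpow_le_rpow_half_of_sq_le hx0 (by nlinarith) hγ0.le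

theorem iterated_log_shift_bound (R : ℝ) (hR0 : 0 < R) (hR : R ≤ 1 / 6)
    (N : ℕ) (hN : 1 ≤ N) (i : ℕ) (hi : i ≤ N - 1)
    (γ : ℝ) (hγ0 : 0 < γ) (hγ1 : γ ≤ 1)
    (hlog : 1 ≤ Real.log (1 / (2 * R))) :
    (Real.log (Real.sqrt (Real.log (1 / (2 * (1 - (i : ℝ) / (3 * (N : ℝ))) * R))))) ^ γ
      ≤ (Real.log (Real.sqrt (Real.log (1 / (2 * R))))) ^ γ + ((i : ℝ) / (N : ℝ)) ^ (γ / 2) :=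
  iterated_log_shift_bound_general R N i hi γ hγ0 hγ1 hlog
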